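/- Let f : ℝ^d → ℝ be a Borel function with ∫ f² dν_X < ∞ that is continuous at a point x₀ ∈ ℝ^d. Let (ν_n)_{n≥1} be Borel probability measures on ℝ^d given by dν_n/dν_X = p_n for Borel functions p_n : ℝ^d → [0,∞) satisfying ∫ p_n dν_X = 1 for all n ≥ 1 and sup{ p_n(x) : ‖x − x₀‖₂ > 1/n } → 0 as n → ∞. Then ∫ (f(x) − f(x₀))² dν_n(x) → 0 as n → ∞. -/

import Mathlib

/-!
The measures `ν_n = p_n ν_X` concentrate at `x₀`, and `g = (f - f x₀)²` is a `ν_X`-integrable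
function vanishing continuously at `x₀`. Splitting `∫ p_n g dν_X` at the radius `1/n`: near `x₀`,
`g` is small and `∫ p_n dν_X = 1`; away from `x₀`, `p_n` is uniformly small and `∫ g dν_X < ∞`.
-/

open MeasureTheory Filter Topology

section Concentration

variable {X : Type*} [PseudoMetricSpace X] [MeasurableSpace X] {μ : Measure X} {x₀ : X}

theorem integral_mul_le_of_le_on_closedBall {p g : X → ℝ} (hp : 0 ≤ p) (hg : 0 ≤ g)
    (hp_int : Integrable p μ) (hg_int : Integrable g μ) {a b r : ℝ} (ha : 0 ≤ a) (hb : 0 ≤ b)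
    (hg_near : ∀ x, dist x x₀ ≤ r → g x ≤ a) (hp_far : ∀ x, r < dist x x₀ → p x ≤ b) :
    ∫ x, p x * g x ∂μ ≤ a * ∫ x, p x ∂μ + b * ∫ x, g x ∂μ := by
  have hpointwise : ∀ x, p x * g x ≤ a * p x + b * g x := by
    intro x
    rcases le_or_gt (dist x x₀) r with hx | hx
    · linarith [mul_le_mul_of_nonneg_left (hg_near x hx) (hp x), mul_nonneg hb (hg x)]
    · linarith [mul_le_mul_of_nonneg_right (hp_far x hx) (hg x), mul_nonneg ha (hp x)]
  calc ∫ x, p x * g x ∂μ ≤ ∫ x, a * p x + b * g x ∂μ :=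
        integral_mono_of_nonneg (.of_forall fun x => mul_nonneg (hp x) (hg x))
          ((hp_int.const_mul a).add (hg_int.const_mul b)) (.of_forall hpointwise)
    _ = a * ∫ x, p x ∂μ + b * ∫ x, g x ∂μ := by
        rw [integral_add (hp_int.const_mul a) (hg_int.const_mul b), integral_const_mul,
          integral_const_mul]

theorem tendsto_integral_mul_of_concentrating {g : X → ℝ} (hg : 0 ≤ g) (hg_int : Integrable g μ)
    (hg_lim : Tendsto g (𝓝 x₀) (𝓝 0)) {p : ℕ → X → ℝ} (hp : ∀ n, 0 ≤ p n)
    (hp_int : ∀ n, ∫ x, p n x ∂μ = 1)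
    (hp_far : ∀ ε > 0, ∃ N : ℕ, ∀ n ≥ N, ∀ x, dist x x₀ > 1 / (n : ℝ) → p n x ≤ ε) :
    Tendsto (fun n => ∫ x, p n x * g x ∂μ) atTop (𝓝 0) := by
  refine tendsto_order.2 ⟨fun a ha => .of_forall fun n =>
    ha.trans_le (integral_nonneg fun x => mul_nonneg (hp n x) (hg x)), fun ε hε => ?_⟩
  set I := ∫ x, g x ∂μ
  have hI : 0 ≤ I := integral_nonneg hg
  obtain ⟨δ, hδ, hg_near⟩ :=
    Metric.eventually_nhds_iff.1 (hg_lim.eventually (gt_mem_nhds (half_pos hε)))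
  set b := ε / (2 * (I + 1))
  have hb : 0 < b := by positivity
  have hbI : b * I < ε / 2 := by
    rw [div_mul_eq_mul_div, div_lt_div_iff₀ (by positivity) two_pos]
    nlinarith
  obtain ⟨N, hN⟩ := hp_far b hb
  filter_upwards [tendsto_one_div_atTop_nhds_zero_nat.eventually (gt_mem_nhds hδ),
    eventually_ge_atTop N] with n hn hnN
  calc ∫ x, p n x * g x ∂μ ≤ ε / 2 * ∫ x, p n x ∂μ + b * I :=
        integral_mul_le_of_le_on_closedBall (hp n) hg (integrable_of_integral_eq_one (hp_int n))
          hg_int (half_pos hε).le hb.le (fun x hx => (hg_near (hx.trans_lt hn)).le) (hN n hnN)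
    _ < ε := by rw [hp_int n]; linarith

end Concentration

theorem integrable_sub_const_sq {Ω : Type*} [MeasurableSpace Ω] {μ : Measure Ω} [IsFiniteMeasure μ]
    {f : Ω → ℝ} (hf : AEStronglyMeasurable f μ) (hf2 : Integrable (fun x => f x ^ 2) μ) (c : ℝ) :
    Integrable (fun x => (f x - c) ^ 2) μ :=
  (((memLp_two_iff_integrable_sq hf).2 hf2).sub (memLp_const c)).integrable_sq

theorem integral_withDensity_ofReal {Ω : Type*} [MeasurableSpace Ω] {μ : Measure Ω} {p : Ω → ℝ}
    (hp_meas : Measurable p) (hp : 0 ≤ p) (g : Ω → ℝ) :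
    ∫ x, g x ∂μ.withDensity (fun x => ENNReal.ofReal (p x)) = ∫ x, p x * g x ∂μ := by
  rw [integral_withDensity_eq_integral_toReal_smul hp_meas.ennreal_ofReal
    (.of_forall fun _ => ENNReal.ofReal_lt_top)]
  simp only [ENNReal.toReal_ofReal (hp _), smul_eq_mul]

/-- If `f` is Borel with `∫ f² dν_X < ∞` and continuous at `x₀`, and `ν_n` are probability
measures with densities `p_n` w.r.t. `ν_X` such that `∫ p_n dν_X = 1` and
`sup{p_n(x) : ‖x − x₀‖₂ > 1/n} → 0`, then `∫ (f(x) − f(x₀))² dν_n(x) → 0`. -/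
theorem stmt_10 {d : ℕ} (νX : Measure (EuclideanSpace ℝ (Fin d))) [IsProbabilityMeasure νX]
    {f : EuclideanSpace ℝ (Fin d) → ℝ} (hf_meas : Measurable f)
    (hf2 : Integrable (fun x => (f x) ^ 2) νX)
    {x₀ : EuclideanSpace ℝ (Fin d)} (hf_cont : ContinuousAt f x₀)
    {p : ℕ → EuclideanSpace ℝ (Fin d) → ℝ} (hp_meas : ∀ n, Measurable (p n))
    (hp_nonneg : ∀ n x, 0 ≤ p n x)
    {ν : ℕ → Measure (EuclideanSpace ℝ (Fin d))}
    (hν : ∀ n, ν n = νX.withDensity (fun x => ENNReal.ofReal (p n x)))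
    (hp_int : ∀ n, ∫ x, p n x ∂νX = 1)
    (hp_sup : ∀ ε > 0, ∃ N : ℕ, ∀ n ≥ N, ∀ x, ‖x - x₀‖ > 1 / (n : ℝ) → p n x ≤ ε) :
    Tendsto (fun n => ∫ x, (f x - f x₀) ^ 2 ∂(ν n)) atTop (nhds 0) := by
  have hg_lim : Tendsto (fun x => (f x - f x₀) ^ 2) (𝓝 x₀) (𝓝 0) := by
    simpa using (hf_cont.tendsto.sub_const (f x₀)).pow 2
  simp_rw [hν, integral_withDensity_ofReal (hp_meas _) (hp_nonneg _)]
  exact tendsto_integral_mul_of_concentrating (fun x => sq_nonneg _)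
    (integrable_sub_const_sq hf_meas.aestronglyMeasurable hf2 _) hg_lim hp_nonneg hp_int
    (by simpa only [dist_eq_norm] using hp_sup)
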